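/- Local exponential decay for sparse operators: there exist c₁, c₂ > 0 such that for every sparse family 𝒮 of dyadic cubes, every cube Q₀, all f₁,…,f_m ∈ L^∞_c supported in Q₀, and all t > 0, |{x ∈ Q₀ : 𝒜²_𝒮(f⃗)(x) > t ℳ(f⃗)(x)}| ≤ c₁ e^{−c₂ t²} |Q₀|, where 𝒜²_𝒮(f⃗)(x) = ( ∑_{Q ∈ 𝒮} ∏_{i=1}^m ⟨|f_i|⟩_Q² 1_Q(x) )^{1/2}. -/

import Mathlib

/-!
Split `𝒜²_𝒮(f⃗)(x)²` into the cubes `Q ∋ x` with `|Q| ≤ |Q₀|` and the larger ones. As the `fᵢ`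
vanish off `Q₀`, `∏ᵢ ⟨|fᵢ|⟩_Q ≤ min(1, |Q₀|/|Q|) ℳ(f⃗)(x)`. The larger cubes containing `x` form a
chain whose `k`-th smallest member has volume at least `kη|Q₀|` (it contains the disjoint sets
`E_P` of the smaller ones), so they contribute at most `2η⁻² ℳ(f⃗)(x)²`. Hence where
`𝒜² > tℳ`, more than `t² - 2η⁻²` cubes of volume at most `|Q₀|` contain `x`, and all of them lie
in the triple of `Q₀`.

For a sparse laminar family, let `B(s)` be the sum of `|E_Q|` over the members with at least `s`
ancestors in the family. Every member counted in `B(a + b)` lies in at least `b` members counted in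
`B(a)`, and the `E_Q` inside one member `P` have total measure at most `|P| ≤ η⁻¹|E_P|`, so
`b B(a + b) ≤ η⁻¹ B(a)`. With `b = ⌈2/η⌉` the mass halves every `b` levels, and the set of points
covered by `s` members has measure at most `η⁻¹ B(s) ≲ 2^{-s/b} |3Q₀|`: this is the Gaussian
decay in `t`.
-/

open MeasureTheory Set Filter ENNReal

noncomputable section

/-- `Q ⊆ ℝⁿ` is a cube (axis-parallel, with positive side length). -/
def IsCube {n : ℕ} (Q : Set (Fin n → ℝ)) : Prop :=
  ∃ (a : Fin n → ℝ) (h : ℝ), 0 < h ∧ Q = Set.univ.pi fun i => Set.Ico (a i) (a i + h)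

/-- A dyadic grid: a countable family of cubes, any two of which are nested or disjoint. -/
def IsDyadicGrid {n : ℕ} (𝒟 : Set (Set (Fin n → ℝ))) : Prop :=
  (∀ Q ∈ 𝒟, IsCube Q) ∧
  (∀ Q ∈ 𝒟, ∀ Q' ∈ 𝒟, Q ⊆ Q' ∨ Q' ⊆ Q ∨ Q ∩ Q' = ∅) ∧ 𝒟.Countable

/-- `𝒮` is `η`-sparse. -/
def IsSparse {n : ℕ} (η : ℝ) (𝒮 : Set (Set (Fin n → ℝ))) : Prop :=
  ∃ E : Set (Fin n → ℝ) → Set (Fin n → ℝ),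
    (∀ Q ∈ 𝒮, E Q ⊆ Q ∧ MeasurableSet (E Q) ∧ ENNReal.ofReal η * volume Q ≤ volume (E Q)) ∧
    𝒮.Pairwise fun Q Q' => Disjoint (E Q) (E Q')

/-- An `η`-sparse family of dyadic cubes. -/
def IsSparseDyadic {n : ℕ} (η : ℝ) (𝒮 : Set (Set (Fin n → ℝ))) : Prop :=
  IsSparse η 𝒮 ∧ ∃ 𝒟, IsDyadicGrid 𝒟 ∧ 𝒮 ⊆ 𝒟

/-- The average `⟨w⟩_Q = (1/|Q|) ∫_Q w`. -/
def lavg {n : ℕ} (w : (Fin n → ℝ) → ℝ≥0∞) (Q : Set (Fin n → ℝ)) : ℝ≥0∞ :=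
  (∫⁻ x in Q, w x) / volume Q

/-- The sparse square operator `𝒜²_𝒮(f⃗)(x) = (∑_{Q∈𝒮} ∏ᵢ ⟨|fᵢ|⟩_Q² 1_Q(x))^{1/2}`. -/
def sparseSq {n m : ℕ} (𝒮 : Set (Set (Fin n → ℝ)))
    (f : Fin m → (Fin n → ℝ) → ℝ) (x : Fin n → ℝ) : ℝ≥0∞ :=
  (∑' Q : 𝒮, (Q : Set (Fin n → ℝ)).indicator
      (fun _ => ∏ i, lavg (fun y => ENNReal.ofReal |f i y|) Q.1 ^ 2) x) ^ ((1 : ℝ) / 2)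

/-- The multilinear maximal function `ℳ(f⃗)(x) = sup_{Q ∋ x} ∏ᵢ ⟨|fᵢ|⟩_Q`. -/
def multiMax {n m : ℕ} (f : Fin m → (Fin n → ℝ) → ℝ) (x : Fin n → ℝ) : ℝ≥0∞ :=
  ⨆ (Q : Set (Fin n → ℝ)) (_ : IsCube Q) (_ : x ∈ Q),
    ∏ i, lavg (fun y => ENNReal.ofReal |f i y|) Q

namespace Finset

variable {β : Type*} [Preorder β] {s : Finset β}

lemma exists_forall_le_of_isChain (hs : IsChain (· ≤ ·) (s : Set β)) (hne : s.Nonempty) :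
    ∃ a ∈ s, ∀ b ∈ s, a ≤ b := by
  obtain ⟨a, ha, hmin⟩ := s.exists_minimal hne
  refine ⟨a, ha, fun b hb => ?_⟩
  rcases eq_or_ne a b with rfl | hab
  · exact le_rfl
  · exact (hs ha hb hab).elim id (hmin hb)

lemma exists_forall_ge_of_isChain (hs : IsChain (· ≤ ·) (s : Set β)) (hne : s.Nonempty) :
    ∃ a ∈ s, ∀ b ∈ s, b ≤ a := by
  obtain ⟨a, ha, hmax⟩ := s.exists_maximal hne
  refine ⟨a, ha, fun b hb => ?_⟩
  rcases eq_or_ne a b with rfl | hab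
  · exact le_rfl
  · exact (hs ha hb hab).elim (hmax hb) id

lemma card_filter_card_le_lt_le [DecidableLE β] (hs : IsChain (· ≤ ·) (s : Set β)) (a : ℕ) :
    #{x ∈ s | #{y ∈ s | x ≤ y} < a} ≤ a := by
  rcases eq_empty_or_nonempty {x ∈ s | #{y ∈ s | x ≤ y} < a} with he | hne
  · simp [he]
  obtain ⟨x₀, hx₀, hmin⟩ :=
    exists_forall_le_of_isChain (hs.mono (coe_subset.2 (filter_subset _ s))) hne
  calc #{x ∈ s | #{y ∈ s | x ≤ y} < a} ≤ #{y ∈ s | x₀ ≤ y} :=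
        card_le_card fun y hy => mem_filter.2 ⟨(mem_filter.1 hy).1, hmin y hy⟩
    _ ≤ a := (mem_filter.1 hx₀).2.le

end Finset

open Finset in
lemma sum_range_inv_mul_sq_le {η : ℝ} (hη : 0 < η) (k : ℕ) :
    ∑ j ∈ range k, (((j : ℝ≥0∞) + 1) * ENNReal.ofReal η)⁻¹ ^ 2 ≤ ENNReal.ofReal (2 / η ^ 2) := by
  have hterm (j : ℕ) : (((j : ℝ≥0∞) + 1) * ENNReal.ofReal η)⁻¹ ^ 2 =
      ENNReal.ofReal ((((j + 1 : ℕ) : ℝ) ^ 2)⁻¹ * (η ^ 2)⁻¹) := by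
    rw [← mul_inv, ← mul_pow, ENNReal.ofReal_inv_of_pos (by positivity),
      ENNReal.ofReal_pow (by positivity), ENNReal.ofReal_mul (by positivity),
      ENNReal.ofReal_natCast, ENNReal.inv_pow]
    push_cast
    rfl
  have hharmonic : ∑ j ∈ range k, (((j + 1 : ℕ) : ℝ) ^ 2)⁻¹ ≤ 2 := by
    have := sum_Ioo_inv_sq_le (α := ℝ) 0 (k + 1)
    rw [← Finset.Ico_add_one_left_eq_Ioo, ← sum_Ico_add' (fun i : ℕ => ((i : ℝ) ^ 2)⁻¹),
      ← range_eq_Ico] at this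
    simpa using this
  rw [sum_congr rfl fun j _ => hterm j, ← ENNReal.ofReal_sum_of_nonneg fun j _ => by positivity,
    ← sum_mul, div_eq_mul_inv]
  gcongr

lemma natCast_add_one_le_of_ofReal_lt {N : ℕ∞} {k : ℕ} {c s : ℝ} (hc : 0 ≤ c)
    (hs : (k : ℝ) + c ≤ s) (h : ENNReal.ofReal s < N + ENNReal.ofReal c) :
    ((k + 1 : ℕ) : ℕ∞) ≤ N := by
  have hkc : (k : ℝ≥0∞) + ENNReal.ofReal c < N + ENNReal.ofReal c := calc
    (k : ℝ≥0∞) + ENNReal.ofReal c = ENNReal.ofReal (k + c) := by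
      rw [ENNReal.ofReal_add (Nat.cast_nonneg k) hc, ENNReal.ofReal_natCast]
    _ ≤ ENNReal.ofReal s := ENNReal.ofReal_le_ofReal hs
    _ < N + ENNReal.ofReal c := h
  have hk : ((k : ℕ∞) : ℝ≥0∞) < N := by
    exact_mod_cast (ENNReal.add_lt_add_iff_right ofReal_ne_top).1 hkc
  push_cast
  exact Order.add_one_le_of_lt (ENat.toENNReal_lt.1 hk)

lemma inv_two_pow_floor_div_le (b y : ℝ) :
    (2⁻¹ : ℝ) ^ ⌊y / b⌋₊ ≤ 2 * Real.exp (-(Real.log 2 / b) * y) := by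
  have hfloor : y / b - 1 < ⌊y / b⌋₊ := by linarith [Nat.lt_floor_add_one (y / b)]
  calc (2⁻¹ : ℝ) ^ ⌊y / b⌋₊ = Real.exp (-(⌊y / b⌋₊ * Real.log 2)) := by
        rw [inv_pow, ← Real.exp_log (by positivity : (0 : ℝ) < 2 ^ ⌊y / b⌋₊), ← Real.exp_neg,
          Real.log_pow]
    _ ≤ Real.exp (-((y / b - 1) * Real.log 2)) := by gcongr
    _ = 2 * Real.exp (-(Real.log 2 / b) * y) := by
        rw [show -((y / b - 1) * Real.log 2) = Real.log 2 + -(Real.log 2 / b) * y by ring,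
          Real.exp_add, Real.exp_log two_pos]

section Laminar

variable {α : Type*} {𝒜 ℬ : Set (Set α)}

def IsLaminar (𝒜 : Set (Set α)) : Prop :=
  ∀ Q ∈ 𝒜, ∀ Q' ∈ 𝒜, Q ⊆ Q' ∨ Q' ⊆ Q ∨ Q ∩ Q' = ∅

lemma IsLaminar.mono (h : IsLaminar 𝒜) (hℬ : ℬ ⊆ 𝒜) : IsLaminar ℬ :=
  fun Q hQ Q' hQ' => h Q (hℬ hQ) Q' (hℬ hQ')

lemma IsLaminar.isChain (h : IsLaminar 𝒜) (hℬ : ℬ ⊆ 𝒜) {x : α} (hx : ∀ Q ∈ ℬ, x ∈ Q) :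
    IsChain (· ⊆ ·) ℬ := by
  intro Q hQ Q' hQ' _
  rcases h Q (hℬ hQ) Q' (hℬ hQ') with h | h | h
  · exact Or.inl h
  · exact Or.inr h
  · exact (eq_empty_iff_forall_notMem.1 h x ⟨hx Q hQ, hx Q' hQ'⟩).elim

def deepMembers (𝒜 : Set (Set α)) (s : ℕ) : Set (Set α) :=
  {Q ∈ 𝒜 | (s : ℕ∞) ≤ {P ∈ 𝒜 | Q ⊆ P}.encard}

lemma deepMembers_subset (s : ℕ) : deepMembers 𝒜 s ⊆ 𝒜 := fun _ hQ => hQ.1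

open Finset in
lemma IsLaminar.le_encard_deepMembers (h : IsLaminar 𝒜) {a b : ℕ} {Q : Set α}
    (hQ : Q ∈ deepMembers 𝒜 (a + b)) (hQne : Q.Nonempty) :
    (b : ℕ∞) ≤ {P ∈ deepMembers 𝒜 a | Q ⊆ P}.encard := by
  classical
  obtain ⟨z, hz⟩ := hQne
  obtain ⟨F, hFA, hFcard⟩ := Set.exists_subset_encard_eq hQ.2
  lift F to Finset (Set α) using Set.finite_of_encard_eq_coe hFcard
  rw [encard_coe_eq_coe_finsetCard, Nat.cast_inj] at hFcard
  have hchain : IsChain (· ≤ ·) (F : Set (Set α)) :=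
    h.isChain (fun P hP => (hFA hP).1) (fun P hP => (hFA hP).2 hz)
  set G := {P ∈ F | a ≤ #{R ∈ F | P ⊆ R}}
  have hG : (G : Set (Set α)) ⊆ {P ∈ deepMembers 𝒜 a | Q ⊆ P} := by
    intro P hP
    obtain ⟨hPF, hPa⟩ := mem_filter.1 hP
    refine ⟨⟨(hFA hPF).1, ?_⟩, (hFA hPF).2⟩
    calc (a : ℕ∞) ≤ #{R ∈ F | P ⊆ R} := by exact_mod_cast hPa
      _ = (({R ∈ F | P ⊆ R} : Finset _) : Set (Set α)).encard :=
        (encard_coe_eq_coe_finsetCard _).symm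
      _ ≤ {R ∈ 𝒜 | P ⊆ R}.encard := Set.encard_le_encard fun R hR =>
        ⟨(hFA (mem_filter.1 hR).1).1, (mem_filter.1 hR).2⟩
  have hGcard : b ≤ #G := by
    have hlow := card_filter_card_le_lt_le hchain a
    have hsplit := card_filter_add_card_filter_not (s := F) (fun P => a ≤ #{R ∈ F | P ⊆ R})
    simp only [not_le] at hsplit
    change #G + _ = _ at hsplit
    omega
  calc (b : ℕ∞) ≤ #G := by exact_mod_cast hGcard
    _ = (G : Set (Set α)).encard := (encard_coe_eq_coe_finsetCard G).symm
    _ ≤ _ := Set.encard_le_encard hG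

open Finset in
lemma IsLaminar.setOf_le_encard_subset (h : IsLaminar 𝒜) (s : ℕ) :
    {x | ((s + 1 : ℕ) : ℕ∞) ≤ {Q ∈ 𝒜 | x ∈ Q}.encard} ⊆ ⋃ Q ∈ deepMembers 𝒜 (s + 1), Q := by
  intro x hx
  obtain ⟨F, hFA, hFcard⟩ := Set.exists_subset_encard_eq hx
  lift F to Finset (Set α) using Set.finite_of_encard_eq_coe hFcard
  rw [encard_coe_eq_coe_finsetCard, Nat.cast_inj] at hFcard
  have hchain : IsChain (· ≤ ·) (F : Set (Set α)) :=
    h.isChain (fun P hP => (hFA hP).1) (fun P hP => (hFA hP).2)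
  obtain ⟨Q, hQF, hQmin⟩ := exists_forall_le_of_isChain hchain (card_pos.1 (by omega))
  refine mem_biUnion ⟨(hFA hQF).1, ?_⟩ (hFA hQF).2
  calc ((s + 1 : ℕ) : ℕ∞) = (F : Set (Set α)).encard := by
        rw [encard_coe_eq_coe_finsetCard, hFcard]
    _ ≤ {P ∈ 𝒜 | Q ⊆ P}.encard := Set.encard_le_encard fun P hP => ⟨(hFA hP).1, hQmin P hP⟩

end Laminar

section Sparse

variable {α : Type*} [MeasurableSpace α] {μ : Measure α} {η : ℝ} {𝒮 𝒜 : Set (Set α)}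
  {E : Set α → Set α}

structure IsSparseWith (μ : Measure α) (η : ℝ) (𝒮 : Set (Set α)) (E : Set α → Set α) :
    Prop where
  subset : ∀ Q ∈ 𝒮, E Q ⊆ Q
  measurableSet : ∀ Q ∈ 𝒮, MeasurableSet (E Q)
  le_measure : ∀ Q ∈ 𝒮, ENNReal.ofReal η * μ Q ≤ μ (E Q)
  pairwiseDisjoint : 𝒮.PairwiseDisjoint E

lemma IsSparse.exists_isSparseWith {n : ℕ} {𝒮 : Set (Set (Fin n → ℝ))} (h : IsSparse η 𝒮) :
    ∃ E, IsSparseWith volume η 𝒮 E :=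
  let ⟨E, hE, hdisj⟩ := h
  ⟨E, fun Q hQ => (hE Q hQ).1, fun Q hQ => (hE Q hQ).2.1, fun Q hQ => (hE Q hQ).2.2, hdisj⟩

namespace IsSparseWith

lemma mono (h : IsSparseWith μ η 𝒮 E) (h𝒜 : 𝒜 ⊆ 𝒮) : IsSparseWith μ η 𝒜 E :=
  ⟨fun Q hQ => h.subset Q (h𝒜 hQ), fun Q hQ => h.measurableSet Q (h𝒜 hQ),
    fun Q hQ => h.le_measure Q (h𝒜 hQ), h.pairwiseDisjoint.subset h𝒜⟩

lemma measure_le (h : IsSparseWith μ η 𝒮 E) (hη : 0 < η) {Q : Set α} (hQ : Q ∈ 𝒮) :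
    μ Q ≤ (ENNReal.ofReal η)⁻¹ * μ (E Q) := by
  rw [mul_comm, ← div_eq_mul_inv, ENNReal.le_div_iff_mul_le (.inl (by simpa using hη))
    (.inl ofReal_ne_top), mul_comm]
  exact h.le_measure Q hQ

open scoped Classical in
lemma tsum_ite_subset_le (h : IsSparseWith μ η 𝒮 E) (T : Set α) :
    ∑' Q : 𝒮, (if (Q : Set α) ⊆ T then μ (E Q) else 0) ≤ μ T := by
  let A : 𝒮 → Set α := fun Q => if (Q : Set α) ⊆ T then E Q else ∅
  have hA (Q : 𝒮) : μ (A Q) = if (Q : Set α) ⊆ T then μ (E Q) else 0 := by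
    simp only [A]
    split_ifs <;> simp
  calc ∑' Q : 𝒮, (if (Q : Set α) ⊆ T then μ (E Q) else 0) = ∑' Q, μ (A Q) := by simp only [hA]
    _ ≤ μ (⋃ Q, A Q) := by
      refine tsum_meas_le_meas_iUnion_of_disjoint μ (fun Q => ?_) fun Q Q' hQQ' => ?_
      · simp only [A]
        split_ifs
        exacts [h.measurableSet Q Q.2, .empty]
      · have hdisj := h.pairwiseDisjoint Q.2 Q'.2 (Subtype.coe_injective.ne hQQ')
        simp only [Function.onFun, A]
        split_ifs <;> simp [hdisj]
    _ ≤ μ T := measure_mono <| iUnion_subset fun Q => by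
      simp only [A]
      split_ifs with hQ
      exacts [(h.subset Q Q.2).trans hQ, empty_subset T]

lemma sum_le_measure (h : IsSparseWith μ η 𝒮 E) {F : Finset (Set α)} (hF : ↑F ⊆ 𝒮) {M : Set α}
    (hM : ∀ Q ∈ F, Q ⊆ M) : ∑ Q ∈ F, μ (E Q) ≤ μ M := by
  rw [← measure_biUnion_finset ((h.pairwiseDisjoint).subset hF)
    fun Q hQ => h.measurableSet Q (hF hQ)]
  exact measure_mono (iUnion₂_subset fun Q hQ => (h.subset Q (hF hQ)).trans (hM Q hQ))

open scoped Classical in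
lemma mul_tsum_deepMembers_le (h : IsSparseWith μ η 𝒮 E) (hη : 0 < η) (hlam : IsLaminar 𝒮)
    (hne : ∀ Q ∈ 𝒮, Q.Nonempty) (a b : ℕ) :
    b * ∑' Q : deepMembers 𝒮 (a + b), μ (E Q) ≤
      (ENNReal.ofReal η)⁻¹ * ∑' P : deepMembers 𝒮 a, μ (E P) := by
  have hcount (Q : deepMembers 𝒮 (a + b)) :
      b * μ (E Q) ≤ ∑' P : deepMembers 𝒮 a, if (Q : Set α) ⊆ P then μ (E Q) else 0 := by
    calc (b : ℝ≥0∞) * μ (E Q)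
        ≤ {P ∈ deepMembers 𝒮 a | (Q : Set α) ⊆ P}.encard * μ (E Q) := by
          gcongr
          exact_mod_cast hlam.le_encard_deepMembers Q.2 (hne Q Q.2.1)
      _ = ∑' P : {P ∈ deepMembers 𝒮 a | (Q : Set α) ⊆ P}, μ (E Q) :=
          (ENNReal.tsum_set_const _ _).symm
      _ = ∑' P : deepMembers 𝒮 a, if (Q : Set α) ⊆ P then μ (E Q) else 0 := by
          rw [tsum_subtype _ fun _ => μ (E Q),
            tsum_subtype (deepMembers 𝒮 a) fun P => if (Q : Set α) ⊆ P then μ (E Q) else 0]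
          congr 1
          ext P
          simp only [indicator_apply, mem_ofPred_eq]
          split_ifs <;> simp_all
  calc b * ∑' Q : deepMembers 𝒮 (a + b), μ (E Q)
      = ∑' Q : deepMembers 𝒮 (a + b), b * μ (E Q) := ENNReal.tsum_mul_left.symm
    _ ≤ ∑' (Q : deepMembers 𝒮 (a + b)) (P : deepMembers 𝒮 a),
          if (Q : Set α) ⊆ P then μ (E Q) else 0 := ENNReal.tsum_le_tsum hcount
    _ = ∑' (P : deepMembers 𝒮 a) (Q : deepMembers 𝒮 (a + b)),
          if (Q : Set α) ⊆ P then μ (E Q) else 0 := ENNReal.tsum_comm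
    _ ≤ ∑' P : deepMembers 𝒮 a, μ P := ENNReal.tsum_le_tsum fun P =>
          (h.mono (deepMembers_subset _)).tsum_ite_subset_le P
    _ ≤ ∑' P : deepMembers 𝒮 a, (ENNReal.ofReal η)⁻¹ * μ (E P) :=
          ENNReal.tsum_le_tsum fun P => h.measure_le hη P.2.1
    _ = (ENNReal.ofReal η)⁻¹ * ∑' P : deepMembers 𝒮 a, μ (E P) := ENNReal.tsum_mul_left

lemma tsum_deepMembers_le_pow (h : IsSparseWith μ η 𝒮 E) (hη : 0 < η) (hlam : IsLaminar 𝒮)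
    (hne : ∀ Q ∈ 𝒮, Q.Nonempty) {b : ℕ} (hb : 2 ≤ b * η) (a j : ℕ) :
    ∑' Q : deepMembers 𝒮 (a + j * b), μ (E Q) ≤ 2⁻¹ ^ j * ∑' Q : deepMembers 𝒮 a, μ (E Q) := by
  have hb' : (2 : ℝ≥0∞) ≤ b * ENNReal.ofReal η := by
    rw [← ENNReal.ofReal_natCast, ← ENNReal.ofReal_mul (Nat.cast_nonneg b)]
    exact_mod_cast ENNReal.ofReal_le_ofReal hb
  have hη' : ENNReal.ofReal η * (ENNReal.ofReal η)⁻¹ = 1 :=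
    ENNReal.mul_inv_cancel (by simpa using hη) ofReal_ne_top
  induction j with
  | zero => rw [zero_mul, add_zero, pow_zero, one_mul]
  | succ j ih =>
    set B := ∑' Q : deepMembers 𝒮 (a + j * b), μ (E Q)
    have hhalf : 2 * ∑' Q : deepMembers 𝒮 (a + (j + 1) * b), μ (E Q) ≤ B := by
      calc 2 * ∑' Q : deepMembers 𝒮 (a + (j + 1) * b), μ (E Q)
          ≤ ENNReal.ofReal η * (b * ∑' Q : deepMembers 𝒮 (a + j * b + b), μ (E Q)) := by
            rw [← mul_assoc, mul_comm _ (b : ℝ≥0∞), add_one_mul, ← add_assoc]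
            gcongr
        _ ≤ ENNReal.ofReal η * ((ENNReal.ofReal η)⁻¹ * B) := by
            gcongr ENNReal.ofReal η * ?_
            exact h.mul_tsum_deepMembers_le hη hlam hne _ _
        _ = B := by rw [← mul_assoc, hη', one_mul]
    calc ∑' Q : deepMembers 𝒮 (a + (j + 1) * b), μ (E Q) ≤ 2⁻¹ * B := by
          rwa [← ENNReal.div_eq_inv_mul, ENNReal.le_div_iff_mul_le (by simp) (by simp), mul_comm]
      _ ≤ 2⁻¹ * (2⁻¹ ^ j * ∑' Q : deepMembers 𝒮 a, μ (E Q)) := by gcongr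
      _ = 2⁻¹ ^ (j + 1) * ∑' Q : deepMembers 𝒮 a, μ (E Q) := by ring

lemma measure_setOf_le_encard_le (h : IsSparseWith μ η 𝒮 E) (hη : 0 < η) (hlam : IsLaminar 𝒮)
    (hne : ∀ Q ∈ 𝒮, Q.Nonempty) (hcount : 𝒮.Countable) {T : Set α} (hT : ∀ Q ∈ 𝒮, Q ⊆ T)
    {b : ℕ} (hb : 2 ≤ b * η) (j : ℕ) :
    μ {x | ((j * b + 1 : ℕ) : ℕ∞) ≤ {Q ∈ 𝒮 | x ∈ Q}.encard} ≤
      (ENNReal.ofReal η)⁻¹ * 2⁻¹ ^ j * μ T := by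
  have hdeep1 : ∑' Q : deepMembers 𝒮 1, μ (E Q) ≤ μ T := by
    classical
    calc ∑' Q : deepMembers 𝒮 1, μ (E Q)
        = ∑' Q : deepMembers 𝒮 1, if (Q : Set α) ⊆ T then μ (E Q) else 0 :=
          tsum_congr fun Q => (if_pos (hT Q Q.2.1)).symm
      _ ≤ μ T := (h.mono (deepMembers_subset 1)).tsum_ite_subset_le T
  calc μ {x | ((j * b + 1 : ℕ) : ℕ∞) ≤ {Q ∈ 𝒮 | x ∈ Q}.encard}
      ≤ μ (⋃ Q ∈ deepMembers 𝒮 (j * b + 1), Q) := measure_mono (hlam.setOf_le_encard_subset _)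
    _ ≤ ∑' Q : deepMembers 𝒮 (j * b + 1), μ Q :=
        measure_biUnion_le μ (hcount.mono (deepMembers_subset _)) _
    _ ≤ ∑' Q : deepMembers 𝒮 (j * b + 1), (ENNReal.ofReal η)⁻¹ * μ (E Q) :=
        ENNReal.tsum_le_tsum fun Q => h.measure_le hη Q.2.1
    _ = (ENNReal.ofReal η)⁻¹ * ∑' Q : deepMembers 𝒮 (1 + j * b), μ (E Q) := by
        rw [ENNReal.tsum_mul_left, add_comm]
    _ ≤ (ENNReal.ofReal η)⁻¹ * (2⁻¹ ^ j * μ T) := by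
        gcongr
        exact (h.tsum_deepMembers_le_pow hη hlam hne hb 1 j).trans (by gcongr)
    _ = (ENNReal.ofReal η)⁻¹ * 2⁻¹ ^ j * μ T := (mul_assoc _ _ _).symm

open Finset in
lemma sum_div_sq_le (h : IsSparseWith μ η 𝒮 E) {v₀ : ℝ≥0∞} (hv₀ : v₀ ≠ 0) (hv₀' : v₀ ≠ ⊤)
    (F : Finset (Set α)) (hF : ↑F ⊆ 𝒮) (hchain : IsChain (· ⊆ ·) (F : Set (Set α)))
    (hv : ∀ Q ∈ F, v₀ ≤ μ Q) :
    ∑ Q ∈ F, (v₀ / μ Q) ^ 2 ≤ ∑ j ∈ range #F, (((j : ℝ≥0∞) + 1) * ENNReal.ofReal η)⁻¹ ^ 2 := by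
  classical
  induction F using Finset.strongInduction with
  | H F ih =>
  rcases F.eq_empty_or_nonempty with rfl | hne
  · simp
  obtain ⟨M, hMF, hMmax⟩ := exists_forall_ge_of_isChain hchain hne
  have hvolM : #F * (ENNReal.ofReal η * v₀) ≤ μ M := calc
    #F * (ENNReal.ofReal η * v₀) = ∑ Q ∈ F, ENNReal.ofReal η * v₀ := by simp
    _ ≤ ∑ Q ∈ F, μ (E Q) := sum_le_sum fun Q hQ =>
        (mul_le_mul_right (hv Q hQ) _).trans (h.le_measure Q (hF hQ))
    _ ≤ μ M := h.sum_le_measure hF hMmax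
  have hM : (v₀ / μ M) ^ 2 ≤ (#F * ENNReal.ofReal η)⁻¹ ^ 2 := by
    gcongr
    calc v₀ / μ M ≤ v₀ / (#F * (ENNReal.ofReal η * v₀)) := ENNReal.div_le_div_left hvolM _
      _ = (#F * ENNReal.ofReal η)⁻¹ := by
        rw [← mul_assoc, ENNReal.div_eq_inv_mul, ENNReal.mul_inv (.inr hv₀') (.inr hv₀), mul_assoc,
          ENNReal.inv_mul_cancel hv₀ hv₀', mul_one]
  have herase := ih (F.erase M) (erase_ssubset hMF) ((coe_subset.2 (erase_subset M F)).trans hF)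
    (hchain.mono (coe_subset.2 (erase_subset M F))) fun Q hQ => hv Q (mem_of_mem_erase hQ)
  calc ∑ Q ∈ F, (v₀ / μ Q) ^ 2 = ∑ Q ∈ F.erase M, (v₀ / μ Q) ^ 2 + (v₀ / μ M) ^ 2 :=
        (sum_erase_add _ _ hMF).symm
    _ ≤ ∑ j ∈ range #(F.erase M), (((j : ℝ≥0∞) + 1) * ENNReal.ofReal η)⁻¹ ^ 2 +
          (#F * ENNReal.ofReal η)⁻¹ ^ 2 := add_le_add herase hM
    _ = ∑ j ∈ range #F, (((j : ℝ≥0∞) + 1) * ENNReal.ofReal η)⁻¹ ^ 2 := by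
        rw [← card_erase_add_one hMF, sum_range_succ]
        push_cast
        rfl

open Finset in
lemma tsum_indicator_min_sq_le (h : IsSparseWith μ η 𝒮 E) (hη : 0 < η) (hlam : IsLaminar 𝒮)
    (x : α) {v₀ : ℝ≥0∞} (hv₀ : v₀ ≠ 0) (hv₀' : v₀ ≠ ⊤) :
    ∑' Q : 𝒮, (Q : Set α).indicator (fun _ => min 1 (v₀ / μ Q) ^ 2) x ≤
      {Q ∈ 𝒮 | x ∈ Q ∧ μ Q ≤ v₀}.encard + ENNReal.ofReal (2 / η ^ 2) := by
  classical
  have hsplit (Q : 𝒮) : (Q : Set α).indicator (fun _ => min 1 (v₀ / μ Q) ^ 2) x ≤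
      (if x ∈ (Q : Set α) ∧ μ Q ≤ v₀ then 1 else 0) +
        if x ∈ (Q : Set α) ∧ v₀ < μ Q then (v₀ / μ Q) ^ 2 else 0 := by
    by_cases hx : x ∈ (Q : Set α)
    · rw [indicator_of_mem hx]
      rcases le_or_gt (μ Q) v₀ with hle | hlt
      · simpa [hx, hle, hle.not_gt] using
          pow_le_one₀ zero_le (min_le_left (1 : ℝ≥0∞) (v₀ / μ Q))
      · simpa [hx, hlt, hlt.not_ge] using
          pow_le_pow_left₀ zero_le (min_le_right (1 : ℝ≥0∞) (v₀ / μ Q)) 2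
    · simp [hx]
  have hsmall : ∑' Q : 𝒮, (if x ∈ (Q : Set α) ∧ μ Q ≤ v₀ then (1 : ℝ≥0∞) else 0) =
      {Q ∈ 𝒮 | x ∈ Q ∧ μ Q ≤ v₀}.encard := by
    rw [← ENNReal.tsum_set_one, _root_.tsum_subtype _ fun _ => (1 : ℝ≥0∞),
      _root_.tsum_subtype 𝒮 fun Q => if x ∈ Q ∧ μ Q ≤ v₀ then (1 : ℝ≥0∞) else 0]
    congr 1
    ext Q
    simp only [indicator_apply, mem_ofPred_eq]
    split_ifs <;> simp_all
  have hbig : ∑' Q : 𝒮, (if x ∈ (Q : Set α) ∧ v₀ < μ Q then (v₀ / μ Q) ^ 2 else 0) ≤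
      ENNReal.ofReal (2 / η ^ 2) := by
    refine ENNReal.summable.tsum_le_of_sum_le fun s => ?_
    rw [← sum_filter]
    set F := (s.filter fun Q : 𝒮 => x ∈ (Q : Set α) ∧ v₀ < μ Q).map (Function.Embedding.subtype _)
    have hF : ∀ Q ∈ F, Q ∈ 𝒮 ∧ x ∈ Q ∧ v₀ < μ Q := by
      simp only [F, Finset.mem_map, mem_filter, Function.Embedding.coe_subtype]
      rintro _ ⟨Q, ⟨-, hQ⟩, rfl⟩
      exact ⟨Q.2, hQ⟩
    calc _ = ∑ Q ∈ F, (v₀ / μ Q) ^ 2 := (sum_map _ _ _).symm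
      _ ≤ _ := h.sum_div_sq_le hv₀ hv₀' F (fun Q hQ => (hF Q hQ).1)
          (hlam.isChain (fun Q hQ => (hF Q hQ).1) fun Q hQ => (hF Q hQ).2.1)
          fun Q hQ => (hF Q hQ).2.2.le
      _ ≤ _ := sum_range_inv_mul_sq_le hη _
  calc ∑' Q : 𝒮, (Q : Set α).indicator (fun _ => min 1 (v₀ / μ Q) ^ 2) x
      ≤ ∑' Q : 𝒮, ((if x ∈ (Q : Set α) ∧ μ Q ≤ v₀ then 1 else 0) +
          if x ∈ (Q : Set α) ∧ v₀ < μ Q then (v₀ / μ Q) ^ 2 else 0) := ENNReal.tsum_le_tsum hsplit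
    _ = _ := ENNReal.tsum_add
    _ ≤ _ := by rw [hsmall]; gcongr

end IsSparseWith

end Sparse

section Cubes

variable {n m : ℕ} {Q Q₀ : Set (Fin n → ℝ)} {f : Fin m → (Fin n → ℝ) → ℝ} {x : Fin n → ℝ}

lemma volume_pi_Ico_add (a : Fin n → ℝ) (h : ℝ) :
    volume (univ.pi fun i => Ico (a i) (a i + h)) = ENNReal.ofReal h ^ n := by
  simp [volume_pi_pi, Real.volume_Ico]

namespace IsCube

lemma measurableSet (hQ : IsCube Q) : MeasurableSet Q := by
  obtain ⟨a, h, -, rfl⟩ := hQ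
  exact .univ_pi fun i => measurableSet_Ico

lemma nonempty (hQ : IsCube Q) : Q.Nonempty := by
  obtain ⟨a, h, hh, rfl⟩ := hQ
  exact ⟨a, fun i _ => ⟨le_rfl, by linarith⟩⟩

lemma volume_ne_zero (hQ : IsCube Q) : volume Q ≠ 0 := by
  obtain ⟨a, h, hh, rfl⟩ := hQ
  simp [volume_pi_Ico_add, hh.not_ge]

lemma volume_ne_top (hQ : IsCube Q) : volume Q ≠ ⊤ := by
  obtain ⟨a, h, hh, rfl⟩ := hQ
  simp [volume_pi_Ico_add]

lemma exists_triple_superset (hQ₀ : IsCube Q₀) : ∃ T, volume T = 3 ^ n * volume Q₀ ∧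
    ∀ Q, IsCube Q → (Q ∩ Q₀).Nonempty → volume Q ≤ volume Q₀ → Q ⊆ T := by
  obtain ⟨b, h₀, hh₀, rfl⟩ := hQ₀
  refine ⟨univ.pi fun i => Ico (b i - h₀) (b i - h₀ + 3 * h₀), ?_, ?_⟩
  · simp only [volume_pi_Ico_add (fun i => b i - h₀), volume_pi_Ico_add,
      ENNReal.ofReal_mul (show (0 : ℝ) ≤ 3 by norm_num), mul_pow]
    norm_num
  rintro _ ⟨a, h, hh, rfl⟩ ⟨z, hzQ, hzQ₀⟩ hvol y hy i -
  have hside : h ≤ h₀ := by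
    rcases n.eq_zero_or_pos with rfl | hn
    · exact i.elim0
    rw [volume_pi_Ico_add, volume_pi_Ico_add] at hvol
    exact (ENNReal.ofReal_le_ofReal_iff hh₀.le).1 ((ENNReal.pow_le_pow_left_iff hn.ne').1 hvol)
  have hz := hzQ i (mem_univ i)
  have hz₀ := hzQ₀ i (mem_univ i)
  have hyi := hy i (mem_univ i)
  simp only [mem_Ico] at hz hz₀ hyi ⊢
  constructor <;> linarith

end IsCube

lemma prod_lavg_le_multiMax (hQ : IsCube Q) (hx : x ∈ Q) :
    ∏ i, lavg (fun y => ENNReal.ofReal |f i y|) Q ≤ multiMax f x :=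
  le_iSup₂_of_le Q hQ (le_iSup_of_le hx le_rfl)

lemma lavg_le_div_mul_lavg {w : (Fin n → ℝ) → ℝ≥0∞} (hw : ∀ y ∉ Q₀, w y = 0)
    (h0 : volume Q₀ ≠ 0) (htop : volume Q₀ ≠ ⊤) (Q : Set (Fin n → ℝ)) :
    lavg w Q ≤ volume Q₀ / volume Q * lavg w Q₀ := by
  have hsupp : Function.support w ⊆ Q₀ := fun y hy => by_contra fun h => hy (hw y h)
  calc lavg w Q ≤ (∫⁻ y in Q₀, w y) / volume Q := by
        rw [lavg, setLIntegral_eq_of_support_subset hsupp]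
        exact ENNReal.div_le_div_right (setLIntegral_le_lintegral _ _) _
    _ = volume Q₀ / volume Q * lavg w Q₀ := by
        rw [lavg, mul_comm, ← mul_div_assoc, ENNReal.div_mul_cancel h0 htop]

open Finset in
lemma prod_lavg_le_min_mul_multiMax (hm : 0 < m) (hQ : IsCube Q) (hQ₀ : IsCube Q₀)
    (hsupp : ∀ i y, y ∉ Q₀ → f i y = 0) (hxQ : x ∈ Q) (hxQ₀ : x ∈ Q₀) :
    ∏ i, lavg (fun y => ENNReal.ofReal |f i y|) Q ≤ min 1 (volume Q₀ / volume Q) * multiMax f x := by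
  rcases le_total 1 (volume Q₀ / volume Q) with h1 | h1
  · rw [min_eq_left h1, one_mul]
    exact prod_lavg_le_multiMax hQ hxQ
  rw [min_eq_right h1]
  calc ∏ i, lavg (fun y => ENNReal.ofReal |f i y|) Q
      ≤ ∏ i, (volume Q₀ / volume Q * lavg (fun y => ENNReal.ofReal |f i y|) Q₀) :=
        prod_le_prod' fun i _ => lavg_le_div_mul_lavg (fun y hy => by simp [hsupp i y hy])
          hQ₀.volume_ne_zero hQ₀.volume_ne_top Q
    _ = (volume Q₀ / volume Q) ^ m * ∏ i, lavg (fun y => ENNReal.ofReal |f i y|) Q₀ := by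
        rw [prod_mul_distrib, prod_const, card_univ, Fintype.card_fin]
    _ ≤ volume Q₀ / volume Q * multiMax f x := by
        gcongr
        · exact pow_le_of_le_one zero_le h1 hm.ne'
        · exact prod_lavg_le_multiMax hQ₀ hxQ₀

open Finset in
lemma sparseSq_sq_le {𝒮 : Set (Set (Fin n → ℝ))} (hm : 0 < m) (h𝒮 : ∀ Q ∈ 𝒮, IsCube Q)
    (hQ₀ : IsCube Q₀) (hsupp : ∀ i y, y ∉ Q₀ → f i y = 0) (hx : x ∈ Q₀) :
    sparseSq 𝒮 f x ^ 2 ≤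
      (∑' Q : 𝒮, (Q : Set (Fin n → ℝ)).indicator
        (fun _ => min 1 (volume Q₀ / volume (Q : Set (Fin n → ℝ))) ^ 2) x) *
        multiMax f x ^ 2 := by
  rw [sparseSq, ← ENNReal.rpow_natCast, ← ENNReal.rpow_mul, ← ENNReal.tsum_mul_right]
  norm_num
  refine ENNReal.tsum_le_tsum fun Q => ?_
  by_cases hxQ : x ∈ (Q : Set (Fin n → ℝ))
  · simp only [indicator_of_mem hxQ, Finset.prod_pow, ← mul_pow]
    gcongr
    exact prod_lavg_le_min_mul_multiMax hm (h𝒮 Q Q.2) hQ₀ hsupp hxQ hx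
  · simp [indicator_of_notMem hxQ]

end Cubes

section Decay

variable {n m : ℕ} {η : ℝ} {𝒮 : Set (Set (Fin n → ℝ))} {E : Set (Fin n → ℝ) → Set (Fin n → ℝ)}
  {Q₀ : Set (Fin n → ℝ)} {f : Fin m → (Fin n → ℝ) → ℝ} {t : ℝ}

lemma ofReal_sq_lt_of_lt_sparseSq (hm : 0 < m) (hE : IsSparseWith volume η 𝒮 E) (hη : 0 < η)
    (hlam : IsLaminar 𝒮) (h𝒮 : ∀ Q ∈ 𝒮, IsCube Q) (hQ₀ : IsCube Q₀)
    (hsupp : ∀ i y, y ∉ Q₀ → f i y = 0) {x : Fin n → ℝ} (hx : x ∈ Q₀) (ht : 0 ≤ t)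
    (hlt : ENNReal.ofReal t * multiMax f x < sparseSq 𝒮 f x) :
    ENNReal.ofReal (t ^ 2) <
      {Q ∈ 𝒮 | x ∈ Q ∧ volume Q ≤ volume Q₀}.encard + ENNReal.ofReal (2 / η ^ 2) := by
  have hsq : ENNReal.ofReal (t ^ 2) * multiMax f x ^ 2 <
      (∑' Q : 𝒮, (Q : Set (Fin n → ℝ)).indicator
        (fun _ => min 1 (volume Q₀ / volume (Q : Set (Fin n → ℝ))) ^ 2) x) * multiMax f x ^ 2 :=
    calc ENNReal.ofReal (t ^ 2) * multiMax f x ^ 2 = (ENNReal.ofReal t * multiMax f x) ^ 2 := by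
          rw [mul_pow, ENNReal.ofReal_pow ht]
      _ < sparseSq 𝒮 f x ^ 2 := ENNReal.pow_lt_pow_left two_ne_zero hlt
      _ ≤ _ := sparseSq_sq_le hm h𝒮 hQ₀ hsupp hx
  exact (lt_of_mul_lt_mul_right' hsq).trans_le
    (hE.tsum_indicator_min_sq_le hη hlam x hQ₀.volume_ne_zero hQ₀.volume_ne_top)

lemma volume_setOf_lt_sparseSq_le (hm : 0 < m) (hE : IsSparseWith volume η 𝒮 E) (hη : 0 < η)
    (hlam : IsLaminar 𝒮) (h𝒮 : ∀ Q ∈ 𝒮, IsCube Q) (hcount : 𝒮.Countable) (hQ₀ : IsCube Q₀)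
    (hsupp : ∀ i y, y ∉ Q₀ → f i y = 0) (ht : 0 ≤ t) {b j : ℕ} (hb : 2 ≤ b * η)
    (hj : (j * b : ℝ) + 2 / η ^ 2 ≤ t ^ 2) :
    volume {x ∈ Q₀ | ENNReal.ofReal t * multiMax f x < sparseSq 𝒮 f x} ≤
      (ENNReal.ofReal η)⁻¹ * 2⁻¹ ^ j * (3 ^ n * volume Q₀) := by
  obtain ⟨T, hT, hQT⟩ := hQ₀.exists_triple_superset
  have hlevel : {x ∈ Q₀ | ENNReal.ofReal t * multiMax f x < sparseSq 𝒮 f x} ⊆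
      {x | ((j * b + 1 : ℕ) : ℕ∞) ≤ {Q ∈ {Q ∈ 𝒮 | Q ⊆ T} | x ∈ Q}.encard} := by
    rintro x ⟨hx, hlt⟩
    calc ((j * b + 1 : ℕ) : ℕ∞) ≤ {Q ∈ 𝒮 | x ∈ Q ∧ volume Q ≤ volume Q₀}.encard :=
          natCast_add_one_le_of_ofReal_lt (by positivity) (by push_cast; exact hj)
            (ofReal_sq_lt_of_lt_sparseSq hm hE hη hlam h𝒮 hQ₀ hsupp hx ht hlt)
      _ ≤ {Q ∈ {Q ∈ 𝒮 | Q ⊆ T} | x ∈ Q}.encard := encard_le_encard fun Q ⟨hQ, hxQ, hvol⟩ =>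
          ⟨⟨hQ, hQT Q (h𝒮 Q hQ) ⟨x, hxQ, hx⟩ hvol⟩, hxQ⟩
  rw [← hT]
  exact (measure_mono hlevel).trans <| (hE.mono (sep_subset _ _)).measure_setOf_le_encard_le hη
    (hlam.mono (sep_subset _ _)) (fun Q hQ => (h𝒮 Q hQ.1).nonempty) (hcount.mono (sep_subset _ _))
    (fun Q hQ => hQ.2) hb j

lemma volume_setOf_lt_sparseSq_le_floor (hm : 0 < m) (hE : IsSparseWith volume η 𝒮 E)
    (hη : 0 < η) (hη1 : η ≤ 1) (hlam : IsLaminar 𝒮) (h𝒮 : ∀ Q ∈ 𝒮, IsCube Q)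
    (hcount : 𝒮.Countable) (hQ₀ : IsCube Q₀) (hsupp : ∀ i y, y ∉ Q₀ → f i y = 0) (ht : 0 ≤ t)
    {b : ℕ} (hb : 2 ≤ b * η) :
    volume {x ∈ Q₀ | ENNReal.ofReal t * multiMax f x < sparseSq 𝒮 f x} ≤
      ENNReal.ofReal (3 ^ n / η * 2⁻¹ ^ ⌊(t ^ 2 - 2 / η ^ 2) / b⌋₊) * volume Q₀ := by
  have hb0 : (0 : ℝ) < b := by nlinarith [Nat.cast_nonneg (α := ℝ) b]
  rcases lt_or_ge (t ^ 2 - 2 / η ^ 2) 0 with hy | hy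
  · rw [Nat.floor_of_nonpos (div_nonpos_of_nonpos_of_nonneg hy.le hb0.le), pow_zero, mul_one]
    refine (measure_mono (sep_subset _ _)).trans (le_mul_of_one_le_left' ?_)
    exact ENNReal.one_le_ofReal.2 ((one_le_div hη).2 (hη1.trans (one_le_pow₀ (by norm_num))))
  have hfloor := Nat.floor_le (div_nonneg hy hb0.le)
  rw [le_div_iff₀ hb0] at hfloor
  calc _ ≤ (ENNReal.ofReal η)⁻¹ * 2⁻¹ ^ ⌊(t ^ 2 - 2 / η ^ 2) / b⌋₊ * (3 ^ n * volume Q₀) :=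
        volume_setOf_lt_sparseSq_le hm hE hη hlam h𝒮 hcount hQ₀ hsupp ht hb (by linarith)
    _ = ENNReal.ofReal (3 ^ n / η * 2⁻¹ ^ ⌊(t ^ 2 - 2 / η ^ 2) / b⌋₊) * volume Q₀ := by
        rw [ENNReal.ofReal_mul (by positivity), ENNReal.ofReal_div_of_pos hη,
          ENNReal.ofReal_pow (by norm_num), ENNReal.ofReal_pow (by norm_num),
          ENNReal.ofReal_inv_of_pos (by norm_num), ENNReal.div_eq_inv_mul]
        norm_num
        ring

end Decay

/-- Local exponential decay for sparse operators:
`|{x ∈ Q₀ : 𝒜²_𝒮(f⃗)(x) > t ℳ(f⃗)(x)}| ≤ c₁ e^{−c₂ t²} |Q₀|` for bounded `fᵢ`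
supported in `Q₀`. -/
theorem sparse_square_local_decay (n m : ℕ) (hm : 0 < m)
    (η : ℝ) (hη : 0 < η) (hη1 : η ≤ 1) :
    ∃ c₁ c₂ : ℝ, 0 < c₁ ∧ 0 < c₂ ∧
      ∀ (𝒮 : Set (Set (Fin n → ℝ))), IsSparseDyadic η 𝒮 →
      ∀ (Q₀ : Set (Fin n → ℝ)), IsCube Q₀ →
      ∀ f : Fin m → (Fin n → ℝ) → ℝ, (∀ i, Measurable (f i)) →
        (∀ i, ∃ M : ℝ, ∀ x, |f i x| ≤ M) →
        (∀ i x, x ∉ Q₀ → f i x = 0) →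
        ∀ t : ℝ, 0 < t →
          volume {x ∈ Q₀ | ENNReal.ofReal t * multiMax f x < sparseSq 𝒮 f x}
            ≤ ENNReal.ofReal (c₁ * Real.exp (-c₂ * t ^ 2)) * volume Q₀ := by
  set b := ⌈2 / η⌉₊
  have hb : 2 ≤ b * η := (div_le_iff₀ hη).1 (Nat.le_ceil _)
  have hb0 : (0 : ℝ) < b := by exact_mod_cast Nat.ceil_pos.2 (by positivity : 0 < 2 / η)
  refine ⟨3 ^ n / η * (2 * Real.exp (Real.log 2 / b * (2 / η ^ 2))), Real.log 2 / b,
    by positivity, div_pos (Real.log_pos one_lt_two) hb0, ?_⟩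
  rintro 𝒮 ⟨hsparse, 𝒟, ⟨h𝒟cube, h𝒟lam, h𝒟count⟩, h𝒮𝒟⟩ Q₀ hQ₀ f - - hsupp t ht
  obtain ⟨E, hE⟩ := hsparse.exists_isSparseWith
  refine (volume_setOf_lt_sparseSq_le_floor hm hE hη hη1 (IsLaminar.mono h𝒟lam h𝒮𝒟)
    (fun Q hQ => h𝒟cube Q (h𝒮𝒟 hQ)) (h𝒟count.mono h𝒮𝒟) hQ₀ hsupp ht.le hb).trans ?_
  gcongr ENNReal.ofReal ?_ * _
  calc 3 ^ n / η * 2⁻¹ ^ ⌊(t ^ 2 - 2 / η ^ 2) / b⌋₊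
      ≤ 3 ^ n / η * (2 * Real.exp (-(Real.log 2 / b) * (t ^ 2 - 2 / η ^ 2))) := by
        gcongr
        exact inv_two_pow_floor_div_le b _
    _ = 3 ^ n / η * (2 * Real.exp (Real.log 2 / b * (2 / η ^ 2))) *
          Real.exp (-(Real.log 2 / b) * t ^ 2) := by
        rw [mul_assoc (3 ^ n / η), mul_assoc 2, ← Real.exp_add]
        ring_nf
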